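/- arXiv:2604.22663 — 4 statements merged into one kernel-verified Lean document; each statement's English description precedes it below -/
import Mathlib

section
/- Let H be a hypergraph with edge set E, let q : 2^E → ℝ≥0 be symmetric (q(F) = q(E∖F)), let ρ be a probability measure on E with ρ({e}) ≤ 1/2 for every e ∈ E, and let φ : [0,1/2] → ℝ≥0 be nondecreasing. If q(F) ≥ φ(min{ρ(F), ρ(E∖F)}) for all F ⊆ E, then the branchwidth B_H(q) satisfies B_H(q) ≥ φ(1/3), provided |E| ≥ 2. -/
/-!
Fix a branch decomposition `(T, δ)` and move the mass of `ρ` to the leaves of `T`. Some tree edge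
splits this mass into two parts that both lie in `[1/3, 2/3]`: among the oriented edges `uv` whose
far side carries more than `2/3`, take one with the smallest far side. That far side is `v`
together with the far sides of the at most two further edges at `v`. If `v` is a leaf its mass is
at most `1/2`; otherwise one of those edges carries at least `1/3`, and by minimality at most `2/3`.
The cut `F` of that edge has `min (ρ F) (ρ Fᶜ) ∈ [1/3, 1/2]`, so the width of `(T, δ)` is at least
`q F ≥ φ (1/3)`. Branch decompositions exist: a complete binary tree on `2n + 1` vertices has
`n + 1` leaves.
-/

open scoped Classical

noncomputable section

/-- A branch decomposition of the edge set `E` (here an abstract finite type) of a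
hypergraph: a subcubic tree `T` together with a map `δ` that is a bijection from
the leaves (degree-≤-1 vertices) of `T` onto `E`. -/
def IsBranchDecomp {β E : Type} [Fintype β] (T : SimpleGraph β) (δ : β → E) : Prop :=
  T.IsTree ∧ (∀ v, T.degree v ≤ 3) ∧ Set.BijOn δ {v | T.degree v ≤ 1} Set.univ

/-- The side of the bipartition of `E` induced by the tree edge `{u,v}`:
the labels of the leaves in the component of `u` after deleting the edge. -/
def cutSide {β E : Type} [Fintype β] [Fintype E] [DecidableEq E]
    (T : SimpleGraph β) (δ : β → E) (u v : β) : Finset E :=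
  Finset.univ.filter fun e =>
    ∃ ℓ, T.degree ℓ ≤ 1 ∧ δ ℓ = e ∧ (T.deleteEdges {s(u, v)}).Reachable u ℓ

/-- The set of widths of branch decompositions of `E` with respect to the
edge-set function `q`: the width of a decomposition is the supremum of the
`q`-values of its induced cuts (`sSup ∅ = 0` handles the `|E| ≤ 1` convention). -/
def widthSet {E : Type} [Fintype E] [DecidableEq E] (q : Finset E → ℝ) : Set ℝ :=
  {w | ∃ (β : Type) (_ : Fintype β) (T : SimpleGraph β) (δ : β → E),
        IsBranchDecomp T δ ∧
        w = sSup {x | ∃ u v, T.Adj u v ∧ x = q (cutSide T δ u v)}}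

/-- The branchwidth `𝔅_H(q)` of a symmetric edge-set function `q`. -/
def branchwidth {E : Type} [Fintype E] [DecidableEq E] (q : Finset E → ℝ) : ℝ :=
  sInf (widthSet q)

namespace SimpleGraph

open Finset

variable {V : Type*} {G : SimpleGraph V} {u v w x : V}

lemma Connected.reachable_deleteEdges_or (hG : G.Connected) (huv : G.Adj u v) (x : V) :
    (G.deleteEdges {s(u, v)}).Reachable u x ∨ (G.deleteEdges {s(u, v)}).Reachable v x := by
  obtain ⟨p, hp⟩ := hG.exists_isPath x u
  by_cases hup : s(u, v) ∈ p.edges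
  · have hvp := p.snd_mem_support_of_mem_edges hup
    have hu : u ∉ (p.takeUntil v hvp).support :=
      Walk.endpoint_notMem_support_takeUntil hp hvp huv.ne
    exact .inr (reachable_deleteEdges_iff_exists_walk.2
      ⟨_, fun h => hu ((p.takeUntil v hvp).fst_mem_support_of_mem_edges h)⟩).symm
  · exact .inl (reachable_deleteEdges_iff_exists_walk.2 ⟨p, hup⟩).symm

variable [Fintype V]

def farSide (G : SimpleGraph V) (u v : V) : Finset V :=
  univ.filter fun x => (G.deleteEdges {s(u, v)}).Reachable v x

lemma mem_farSide : x ∈ G.farSide u v ↔ (G.deleteEdges {s(u, v)}).Reachable v x := by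
  simp [farSide]

lemma mem_farSide_iff_exists_walk :
    x ∈ G.farSide u v ↔ ∃ p : G.Walk v x, s(u, v) ∉ p.edges := by
  rw [mem_farSide, reachable_deleteEdges_iff_exists_walk]

lemma mem_farSide_swap : x ∈ G.farSide v u ↔ (G.deleteEdges {s(u, v)}).Reachable u x := by
  rw [mem_farSide, Sym2.eq_swap]

lemma right_mem_farSide (G : SimpleGraph V) (u v : V) : v ∈ G.farSide u v :=
  mem_farSide.2 .rfl

lemma disjoint_farSide (hG : G.IsAcyclic) (huv : G.Adj u v) :
    Disjoint (G.farSide u v) (G.farSide v u) := by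
  refine Finset.disjoint_left.2 fun x hv hu => ?_
  rw [mem_farSide] at hv
  rw [mem_farSide_swap] at hu
  exact isBridge_iff.1 (isAcyclic_iff_forall_adj_isBridge.1 hG huv) (hu.trans hv.symm)

lemma IsTree.sum_farSide_add_sum_farSide (hG : G.IsTree) (huv : G.Adj u v) (f : V → ℝ) :
    ∑ x ∈ G.farSide u v, f x + ∑ x ∈ G.farSide v u, f x = ∑ x, f x := by
  rw [← sum_union (disjoint_farSide hG.isAcyclic huv)]
  congr
  refine eq_univ_of_forall fun x => ?_
  rw [mem_union, mem_farSide, mem_farSide_swap]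
  exact (hG.connected.reachable_deleteEdges_or huv x).symm

lemma exists_adj_mem_farSide (hx : x ∈ G.farSide u v) (hxv : x ≠ v) :
    ∃ w, G.Adj v w ∧ w ≠ u ∧ x ∈ G.farSide v w := by
  obtain ⟨p, hp⟩ := mem_farSide_iff_exists_walk.1 hx
  have hpath := p.bypass_isPath
  have hedges : s(u, v) ∉ p.bypass.edges := fun h => hp (p.edges_bypass_subset_edges h)
  cases hq : p.bypass with
  | nil => exact absurd rfl hxv
  | @cons _ c _ hvc q =>
    rw [hq, Walk.cons_isPath_iff] at hpath
    rw [hq, Walk.edges_cons, List.mem_cons, not_or] at hedges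
    refine ⟨c, hvc, ?_, mem_farSide_iff_exists_walk.2
      ⟨q, fun h => hpath.2 (q.fst_mem_support_of_mem_edges h)⟩⟩
    rintro rfl
    exact hedges.1 Sym2.eq_swap

lemma farSide_subset_farSide (hG : G.IsAcyclic) (hvw : G.Adj v w) (hwu : w ≠ u) :
    G.farSide v w ⊆ G.farSide u v := by
  intro x hx
  obtain ⟨p, hp⟩ := mem_farSide_iff_exists_walk.1 hx
  have hv : v ∉ p.support := fun hv => hp <| p.edges_takeUntil_subset_edges hv <| by
    simpa using isBridge_iff_forall_walk_mem_edges.1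
      (isAcyclic_iff_forall_adj_isBridge.1 hG hvw) (p.takeUntil v hv).reverse
  refine mem_farSide_iff_exists_walk.2 ⟨.cons hvw p, ?_⟩
  rw [Walk.edges_cons, List.mem_cons, not_or]
  refine ⟨fun h => hwu ?_, fun h => hv (p.snd_mem_support_of_mem_edges h)⟩
  rcases Sym2.eq_iff.1 h with ⟨rfl, rfl⟩ | ⟨rfl, -⟩ <;> rfl

lemma left_notMem_farSide (hG : G.IsAcyclic) (hvw : G.Adj v w) : v ∉ G.farSide v w :=
  Finset.disjoint_right.1 (disjoint_farSide hG hvw) (right_mem_farSide G w v)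

lemma farSide_ssubset_farSide (hG : G.IsAcyclic) (hvw : G.Adj v w) (hwu : w ≠ u) :
    G.farSide v w ⊂ G.farSide u v :=
  ssubset_iff_of_subset (farSide_subset_farSide hG hvw hwu) |>.2
    ⟨v, right_mem_farSide G u v, left_notMem_farSide hG hvw⟩

variable [DecidableRel G.Adj]

lemma farSide_eq_insert_biUnion [DecidableEq V] (hG : G.IsAcyclic) (huv : G.Adj u v) :
    G.farSide u v = insert v (((G.neighborFinset v).erase u).biUnion (G.farSide v)) := by
  ext x
  simp only [mem_insert, mem_biUnion, mem_erase, mem_neighborFinset]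
  constructor
  · intro hx
    by_cases hxv : x = v
    · exact .inl hxv
    · obtain ⟨w, hvw, hwu, hxw⟩ := exists_adj_mem_farSide hx hxv
      exact .inr ⟨w, ⟨hwu, hvw⟩, hxw⟩
  · rintro (rfl | ⟨w, ⟨hwu, hvw⟩, hxw⟩)
    · exact right_mem_farSide G u x
    · exact farSide_subset_farSide hG hvw hwu hxw

lemma sum_farSide_eq [DecidableEq V] (hG : G.IsAcyclic) (huv : G.Adj u v) (f : V → ℝ) :
    ∑ x ∈ G.farSide u v, f x =
      f v + ∑ w ∈ (G.neighborFinset v).erase u, ∑ x ∈ G.farSide v w, f x := by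
  have hdisj : ((G.neighborFinset v).erase u : Set V).PairwiseDisjoint (G.farSide v) := by
    intro w₁ hw₁ w₂ hw₂ hne
    simp only [coe_erase, Set.mem_sdiff, mem_coe, mem_neighborFinset] at hw₁ hw₂
    exact (disjoint_farSide hG hw₂.1.symm).mono_left (farSide_subset_farSide hG hw₁.1 hne)
  have hv : v ∉ ((G.neighborFinset v).erase u).biUnion (G.farSide v) := by
    simp only [mem_biUnion, mem_erase, mem_neighborFinset]
    exact fun ⟨w, ⟨_, hvw⟩, hv⟩ => left_notMem_farSide hG hvw hv
  rw [farSide_eq_insert_biUnion hG huv, sum_insert hv, sum_biUnion hdisj]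

variable {f : V → ℝ}

lemma sum_farSide_le_two_thirds (hG : G.IsAcyclic) (huv : G.Adj u v) (hdeg : G.degree v ≤ 3)
    (hf : f v ≤ 1 / 2) (hf_inner : 2 ≤ G.degree v → f v = 0)
    (hlight : ∀ w, G.Adj v w → w ≠ u → ∑ x ∈ G.farSide v w, f x ≤ 1 / 3) :
    ∑ x ∈ G.farSide u v, f x ≤ 2 / 3 := by
  classical
  set N := (G.neighborFinset v).erase u
  have hsplit : ∑ x ∈ G.farSide u v, f x = f v + ∑ w ∈ N, ∑ x ∈ G.farSide v w, f x :=
    sum_farSide_eq hG huv f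
  rcases N.eq_empty_or_nonempty with hN | hN
  · rw [hsplit, hN, sum_empty]
    linarith
  have hcard : #N + 1 = G.degree v := by
    rw [card_erase_add_one ((mem_neighborFinset G v u).2 huv.symm),
      card_neighborFinset_eq_degree]
  have hN₁ := hN.card_pos
  have hN₂ : (#N : ℝ) ≤ 2 := by exact_mod_cast (by omega : #N ≤ 2)
  have hchildren : ∑ w ∈ N, ∑ x ∈ G.farSide v w, f x ≤ #N * (1 / 3) := by
    simpa using sum_le_sum fun w hw =>
      hlight w ((mem_neighborFinset G v w).1 (mem_erase.1 hw).2) (mem_erase.1 hw).1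
  rw [hsplit, hf_inner (by omega)]
  linarith

theorem IsTree.exists_adj_sum_farSide_mem_Icc (hG : G.IsTree) (hdeg : ∀ v, G.degree v ≤ 3)
    (hf : ∀ x, f x ≤ 1 / 2) (hf_inner : ∀ x, 2 ≤ G.degree x → f x = 0) (hsum : ∑ x, f x = 1) :
    ∃ u v, G.Adj u v ∧ ∑ x ∈ G.farSide u v, f x ∈ Set.Icc (1 / 3 : ℝ) (2 / 3) := by
  have : Nontrivial V := by
    by_contra h
    rw [not_nontrivial_iff_subsingleton] at h
    obtain ⟨x⟩ := hG.connected.nonempty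
    rw [Fintype.sum_subsingleton f x] at hsum
    linarith [hf x]
  obtain ⟨u₀, v₀, h₀⟩ := (ne_bot_iff_exists_adj (G := G)).1 <| by
    rintro rfl
    exact not_connected_bot hG.connected
  set heavy := univ.filter fun p : V × V =>
    G.Adj p.1 p.2 ∧ 2 / 3 < ∑ x ∈ G.farSide p.1 p.2, f x
  rcases heavy.eq_empty_or_nonempty with hempty | hne
  · have hlight : ∀ u v, G.Adj u v → ∑ x ∈ G.farSide u v, f x ≤ 2 / 3 := by
      simpa [heavy, filter_eq_empty_iff] using hempty
    have := hG.sum_farSide_add_sum_farSide h₀ f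
    exact ⟨u₀, v₀, h₀, by linarith [hlight v₀ u₀ h₀.symm], hlight u₀ v₀ h₀⟩
  -- A heavy edge with minimal far side: the edges beyond it are not heavy.
  obtain ⟨⟨u, v⟩, hmem, hmin⟩ := heavy.exists_min_image (fun p => #(G.farSide p.1 p.2)) hne
  simp only [heavy, mem_filter, mem_univ, true_and] at hmem
  by_contra! hno
  refine hmem.2.not_ge (sum_farSide_le_two_thirds hG.isAcyclic hmem.1 (hdeg v) (hf v)
    (hf_inner v) fun w hvw hwu => not_lt.1 fun hw => ?_)
  have hw' : 2 / 3 < ∑ x ∈ G.farSide v w, f x := not_le.1 fun h => hno v w hvw ⟨hw.le, h⟩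
  exact (card_lt_card (farSide_ssubset_farSide hG.isAcyclic hvw hwu)).not_ge
    (hmin (v, w) (by simp [heavy, hvw, hw']))

end SimpleGraph

open SimpleGraph Finset

section BranchDecomp

variable {β E : Type} [Fintype β] {T : SimpleGraph β} {δ : β → E}

def leafWeight (T : SimpleGraph β) (δ : β → E) (ρ : E → ℝ) (x : β) : ℝ :=
  if T.degree x ≤ 1 then ρ (δ x) else 0

lemma sum_image_filter_leaves [DecidableEq E] (hδ : Set.InjOn δ {v | T.degree v ≤ 1})
    (S : Finset β) (ρ : E → ℝ) :
    ∑ e ∈ (S.filter (T.degree · ≤ 1)).image δ, ρ e = ∑ x ∈ S, leafWeight T δ ρ x := by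
  rw [sum_image (s := S.filter (T.degree · ≤ 1)) (hδ.mono fun _ hx => (mem_filter.1 hx).2),
    sum_filter]
  rfl

variable [Fintype E] [DecidableEq E]

lemma cutSide_eq_image (u v : β) :
    cutSide T δ u v = ((T.farSide v u).filter (T.degree · ≤ 1)).image δ := by
  ext e
  simp only [cutSide, mem_filter, mem_univ, true_and, mem_image, mem_farSide_swap]
  grind

lemma IsBranchDecomp.sum_cutSide (h : IsBranchDecomp T δ) (ρ : E → ℝ) (u v : β) :
    ∑ e ∈ cutSide T δ u v, ρ e = ∑ x ∈ T.farSide v u, leafWeight T δ ρ x := by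
  rw [cutSide_eq_image, sum_image_filter_leaves h.2.2.injOn]

lemma IsBranchDecomp.sum_leafWeight (h : IsBranchDecomp T δ) (ρ : E → ℝ) :
    ∑ x, leafWeight T δ ρ x = ∑ e, ρ e := by
  have huniv : (univ.filter (T.degree · ≤ 1)).image δ = univ :=
    eq_univ_of_forall fun e => by simpa using h.2.2.surjOn (Set.mem_univ e)
  rw [← sum_image_filter_leaves h.2.2.injOn, huniv]

theorem IsBranchDecomp.exists_cutSide_mem_Icc (h : IsBranchDecomp T δ) {ρ : E → ℝ}
    (hρ1 : ∑ e, ρ e = 1) (hhalf : ∀ e, ρ e ≤ 1 / 2) :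
    ∃ u v, T.Adj u v ∧ ∑ e ∈ cutSide T δ u v, ρ e ∈ Set.Icc (1 / 3 : ℝ) (2 / 3) := by
  have hle : ∀ x, leafWeight T δ ρ x ≤ 1 / 2 := fun x => by
    unfold leafWeight
    split_ifs
    exacts [hhalf _, by norm_num]
  obtain ⟨u, v, huv, hmem⟩ := h.1.exists_adj_sum_farSide_mem_Icc h.2.1 hle
    (fun x hx => if_neg (by omega)) ((h.sum_leafWeight ρ).trans hρ1)
  exact ⟨v, u, huv.symm, h.sum_cutSide ρ v u ▸ hmem⟩

end BranchDecomp

section ParentGraph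

variable {V : Type*} [LinearOrder V] {r : V} {par : V → V}

def parentGraph (r : V) (par : V → V) : SimpleGraph V :=
  SimpleGraph.fromRel fun x y => x ≠ r ∧ par x = y

lemma parentGraph_adj (hpar : ∀ x, x ≠ r → par x < x) {x y : V} :
    (parentGraph r par).Adj x y ↔ x ≠ r ∧ par x = y ∨ y ≠ r ∧ par y = x := by
  rw [parentGraph, fromRel_adj, and_iff_right_iff_imp]
  rintro (⟨hx, rfl⟩ | ⟨hy, rfl⟩)
  exacts [(hpar x hx).ne', (hpar y hy).ne]

lemma parentGraph_adj_par (hpar : ∀ x, x ≠ r → par x < x) {x : V} (hx : x ≠ r) :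
    (parentGraph r par).Adj x (par x) :=
  (parentGraph_adj hpar).2 (.inl ⟨hx, rfl⟩)

lemma parentGraph_connected [WellFoundedLT V] (hpar : ∀ x, x ≠ r → par x < x) :
    (parentGraph r par).Connected := by
  have hreach : ∀ x, (parentGraph r par).Reachable x r := by
    intro x
    induction x using WellFoundedLT.induction with
    | _ x ih =>
      by_cases hx : x = r
      · exact hx ▸ .rfl
      · exact (parentGraph_adj_par hpar hx).reachable.trans (ih _ (hpar x hx))
  exact (connected_iff_exists_forall_reachable _).2 ⟨r, fun x => (hreach x).symm⟩

lemma parentGraph_isTree [Finite V] (hpar : ∀ x, x ≠ r → par x < x) :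
    (parentGraph r par).IsTree := by
  refine isTree_iff_connected_and_card.2 ⟨parentGraph_connected hpar, ?_⟩
  let g : {x // x ≠ r} → (parentGraph r par).edgeSet :=
    fun x => ⟨s(x, par x), parentGraph_adj_par hpar x.2⟩
  have hg : Function.Bijective g := by
    refine ⟨fun x y hxy => ?_, ?_⟩
    · rcases Sym2.eq_iff.1 (congrArg Subtype.val hxy) with ⟨h, -⟩ | ⟨h₁, h₂⟩
      · exact Subtype.ext h
      · have := (hpar x x.2).trans_le (h₁.le.trans (hpar y y.2).le)
        exact absurd h₂ this.ne
    · rintro ⟨e, he⟩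
      induction e using Sym2.ind with | h x y => ?_
      rcases (parentGraph_adj hpar).1 ((mem_edgeSet _).1 he) with ⟨hx, rfl⟩ | ⟨hy, rfl⟩
      · exact ⟨⟨x, hx⟩, rfl⟩
      · exact ⟨⟨y, hy⟩, Subtype.ext Sym2.eq_swap⟩
  rw [← Nat.card_congr (Equiv.ofBijective g hg), ← Finite.card_option,
    Nat.card_congr (Equiv.optionSubtypeNe r)]

end ParentGraph

section Heap

variable {n : ℕ}

def heapParent (n : ℕ) (k : Fin (2 * n + 1)) : Fin (2 * n + 1) :=
  ⟨(k - 1) / 2, by omega⟩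

lemma heapParent_lt {k : Fin (2 * n + 1)} (hk : k ≠ 0) : heapParent n k < k := by
  have : (k : ℕ) ≠ 0 := Fin.val_ne_iff.2 hk
  show ((k : ℕ) - 1) / 2 < k
  omega

def heapGraph (n : ℕ) : SimpleGraph (Fin (2 * n + 1)) :=
  parentGraph 0 (heapParent n)

lemma heapGraph_isTree : (heapGraph n).IsTree :=
  parentGraph_isTree fun _ => heapParent_lt

lemma heapGraph_adj {v w : Fin (2 * n + 1)} :
    (heapGraph n).Adj v w ↔
      (v : ℕ) ≠ 0 ∧ (w : ℕ) = (v - 1) / 2 ∨ (w : ℕ) ≠ 0 ∧ (v : ℕ) = (w - 1) / 2 := by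
  simp only [heapGraph, parentGraph_adj fun _ => heapParent_lt, heapParent, Fin.ext_iff,
    ne_eq, Fin.val_zero]
  omega

lemma heapGraph_degree_le_three (v : Fin (2 * n + 1)) : (heapGraph n).degree v ≤ 3 := by
  rw [← card_neighborFinset_eq_degree, ← card_map Fin.valEmbedding]
  refine (card_le_card fun k hk => ?_).trans
    (card_le_three (a := ((v : ℕ) - 1) / 2) (b := 2 * v + 1) (c := 2 * v + 2))
  obtain ⟨w, hw, rfl⟩ := mem_map.1 hk
  rw [mem_neighborFinset, heapGraph_adj] at hw
  simp only [Fin.valEmbedding_apply, mem_insert, mem_singleton]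
  omega

lemma heapGraph_degree_le_one_iff (v : Fin (2 * n + 1)) :
    (heapGraph n).degree v ≤ 1 ↔ n ≤ v := by
  rw [← card_neighborFinset_eq_degree]
  constructor
  · intro h
    by_contra! hv
    have hsub : {⟨2 * v + 1, by omega⟩, ⟨2 * v + 2, by omega⟩} ⊆
        (heapGraph n).neighborFinset v := by
      intro w hw
      rw [mem_neighborFinset, heapGraph_adj]
      simp only [mem_insert, mem_singleton, Fin.ext_iff] at hw
      omega
    have := card_le_card hsub
    rw [card_pair (by simp [Fin.ext_iff])] at this
    omega
  · intro hv
    refine card_le_one.2 fun a ha b hb => ?_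
    rw [mem_neighborFinset, heapGraph_adj] at ha hb
    exact Fin.ext (by omega)

end Heap

lemma min_one_sub_mem_Icc {a : ℝ} (ha : a ∈ Set.Icc (1 / 3 : ℝ) (2 / 3)) :
    min a (1 - a) ∈ Set.Icc (1 / 3 : ℝ) (1 / 2) :=
  ⟨le_min ha.1 (by linarith [ha.2]), by linarith [min_le_left a (1 - a), min_le_right a (1 - a)]⟩

theorem exists_isBranchDecomp (E : Type) [Fintype E] [Nonempty E] :
    ∃ (β : Type) (_ : Fintype β) (T : SimpleGraph β) (δ : β → E), IsBranchDecomp T δ := by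
  set n := Fintype.card E - 1
  have hcard : Fintype.card E = n + 1 := by
    have := Fintype.card_pos (α := E)
    omega
  let ε : Fin (n + 1) ≃ E := (Fintype.equivFinOfCardEq hcard).symm
  refine ⟨Fin (2 * n + 1), inferInstance, heapGraph n, fun k => ε ⟨k - n, by omega⟩,
    heapGraph_isTree, heapGraph_degree_le_three, ?_⟩
  rw [show {v | (heapGraph n).degree v ≤ 1} = {v : Fin (2 * n + 1) | n ≤ v} from
    Set.ext heapGraph_degree_le_one_iff]
  refine ⟨fun _ _ => Set.mem_univ _, fun a ha b hb hab => ?_, fun e _ => ?_⟩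
  · have := congrArg Fin.val (ε.injective hab)
    simp only [Set.mem_ofPred_eq] at ha hb this
    exact Fin.ext (by omega)
  · refine ⟨⟨ε.symm e + n, by omega⟩, by simp, ?_⟩
    simp

theorem branchwidth_ge_of_balanced_general {E : Type} [Fintype E] [DecidableEq E]
    (hE : 2 ≤ Fintype.card E)
    (q : Finset E → ℝ)
    (ρ : E → ℝ) (hρ1 : ∑ e, ρ e = 1)
    (hhalf : ∀ e, ρ e ≤ 1 / 2)
    (φ : ℝ → ℝ) (hφmono : MonotoneOn φ (Set.Icc 0 (1 / 2)))
    (hlb : ∀ F : Finset E, φ (min (∑ e ∈ F, ρ e) (∑ e ∈ Fᶜ, ρ e)) ≤ q F) :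
    φ (1 / 3) ≤ branchwidth q := by
  have : Nonempty E := Fintype.card_pos_iff.1 (by omega)
  obtain ⟨β, _, T, δ, hTδ⟩ := exists_isBranchDecomp E
  refine le_csInf ⟨_, β, _, T, δ, hTδ, rfl⟩ ?_
  rintro _ ⟨β, _, T, δ, hTδ, rfl⟩
  obtain ⟨u, v, huv, hbal⟩ := hTδ.exists_cutSide_mem_Icc hρ1 hhalf
  set F := cutSide T δ u v
  have hFc : ∑ e ∈ Fᶜ, ρ e = 1 - ∑ e ∈ F, ρ e := by
    rw [← hρ1, ← sum_add_sum_compl F ρ]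
    ring
  have hmin := min_one_sub_mem_Icc hbal
  rw [← hFc] at hmin
  have hcuts : BddAbove {x | ∃ u v, T.Adj u v ∧ x = q (cutSide T δ u v)} :=
    ((Set.finite_range fun p : β × β => q (cutSide T δ p.1 p.2)).subset
      (by rintro _ ⟨u, v, -, rfl⟩; exact ⟨(u, v), rfl⟩)).bddAbove
  calc φ (1 / 3) ≤ φ (min (∑ e ∈ F, ρ e) (∑ e ∈ Fᶜ, ρ e)) :=
        hφmono ⟨by norm_num, by norm_num⟩ ⟨by linarith [hmin.1], hmin.2⟩ hmin.1
    _ ≤ q F := hlb F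
    _ ≤ _ := le_csSup hcuts ⟨u, v, huv, rfl⟩

/-- if `q` is symmetric, `ρ` is a probability measure on `E` with all
point masses `≤ 1/2`, `φ` is nondecreasing on `[0,1/2]`, and
`q(F) ≥ φ(min(ρ(F), ρ(E∖F)))` for all `F ⊆ E`, then `𝔅_H(q) ≥ φ(1/3)`
(provided `|E| ≥ 2`). -/
theorem branchwidth_ge_of_balanced {E : Type} [Fintype E] [DecidableEq E]
    (hE : 2 ≤ Fintype.card E)
    (q : Finset E → ℝ) (hq0 : ∀ F, 0 ≤ q F) (hqsymm : ∀ F : Finset E, q F = q Fᶜ)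
    (ρ : E → ℝ) (hρ0 : ∀ e, 0 ≤ ρ e) (hρ1 : ∑ e, ρ e = 1)
    (hhalf : ∀ e, ρ e ≤ 1 / 2)
    (φ : ℝ → ℝ) (hφmono : MonotoneOn φ (Set.Icc 0 (1 / 2)))
    (hφ0 : ∀ x ∈ Set.Icc (0 : ℝ) (1 / 2), 0 ≤ φ x)
    (hlb : ∀ F : Finset E, φ (min (∑ e ∈ F, ρ e) (∑ e ∈ Fᶜ, ρ e)) ≤ q F) :
    φ (1 / 3) ≤ branchwidth q :=
  branchwidth_ge_of_balanced_general hE q ρ hρ1 hhalf φ hφmono hlb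
end
end

section
/- Let N be a finite index set, let K ⊆ (ℝ≥0)^N be nonempty and compact, and let K↓ := { x ∈ (ℝ≥0)^N : ∃ u ∈ K with x ≤ u pointwise } be its downward closure. Let Φ : (ℝ≥0)^N → ℝ≥0 be monotone and positively homogeneous of degree 1. Then sup_{u ∈ K} Φ(u) = sup_{x ∈ (ℝ≥0)^N} Φ(x) / γ_{K↓}(x), where γ_{K↓}(x) := inf{ α ≥ 0 : x ∈ α·K↓ } is the gauge of K↓ (with conventions 0/0 := 0 and a/∞ := 0). -/
/-!
Every `u ∈ K` lies in `1 • K↓`, so `γ(u) ≤ 1` and `Φ u ≤ Φ u / γ(u)`. Conversely, `Φ x / γ(x)` is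
the supremum of `Φ x / a` over the scalings `x = a • y` with `y ≤ u ∈ K`, and by homogeneity and
monotonicity each such quotient is `Φ y ≤ Φ u`.
-/

open scoped ENNReal NNReal Pointwise

theorem ENNReal.div_sInf_le {A : Set ℝ≥0∞} {b c : ℝ≥0∞} (h : ∀ α ∈ A, c / α ≤ b) :
    c / sInf A ≤ b := by
  rw [div_eq_mul_inv, inv_sInf]
  simp only [ENNReal.mul_iSup]
  exact iSup₂_le h

/-- The gauge `inf {a ≥ 0 | x ∈ a • D}`, valued in `ℝ≥0∞` so that it is `∞` when no scaling of
`D` contains `x`. -/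
noncomputable def ennGauge {E : Type*} [SMul ℝ≥0 E] (D : Set E) (x : E) : ℝ≥0∞ :=
  sInf {α : ℝ≥0∞ | ∃ a : ℝ≥0, α = a ∧ x ∈ a • D}

section

variable {E : Type*}

theorem ennGauge_le_one_of_mem [MulAction ℝ≥0 E] {D : Set E} {x : E} (hx : x ∈ D) :
    ennGauge D x ≤ 1 :=
  sInf_le ⟨1, ENNReal.coe_one.symm, by rwa [one_smul]⟩

theorem le_div_ennGauge_of_mem [MulAction ℝ≥0 E] {D : Set E} {x : E} (hx : x ∈ D)
    (c : ℝ≥0∞) : c ≤ c / ennGauge D x :=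
  calc c = c / 1 := (div_one c).symm
    _ ≤ c / ennGauge D x := ENNReal.div_le_div_left (ennGauge_le_one_of_mem hx) c

theorem div_ennGauge_le_of_forall_smul [SMul ℝ≥0 E] {D : Set E} {x : E} {b c : ℝ≥0∞}
    (h : ∀ (a : ℝ≥0), ∀ y ∈ D, x = a • y → c ≤ b * a) : c / ennGauge D x ≤ b := by
  refine ENNReal.div_sInf_le ?_
  rintro _ ⟨a, rfl, y, hy, rfl⟩
  exact ENNReal.div_le_of_le_mul (h a y hy rfl)

theorem div_ennGauge_lowerClosure_le_iSup [Preorder E] [SMul ℝ≥0 E] {Φ : E → ℝ≥0}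
    (hmono : Monotone Φ) (hhom : ∀ (a : ℝ≥0) (x : E), Φ (a • x) = a * Φ x) (K : Set E) (x : E) :
    (Φ x : ℝ≥0∞) / ennGauge {y | ∃ u ∈ K, y ≤ u} x ≤ ⨆ u ∈ K, (Φ u : ℝ≥0∞) := by
  refine div_ennGauge_le_of_forall_smul ?_
  rintro a y ⟨u, hu, hyu⟩ rfl
  calc (Φ (a • y) : ℝ≥0∞) = Φ y * a := by rw [hhom, ENNReal.coe_mul, mul_comm]
    _ ≤ (⨆ u ∈ K, (Φ u : ℝ≥0∞)) * a := by
      gcongr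
      exact le_iSup₂_of_le u hu (ENNReal.coe_le_coe.2 (hmono hyu))

end

theorem gauge_variational_general {N : Type*}
    (K : Set (N → NNReal))
    (Φ : (N → NNReal) → NNReal)
    (hmono : ∀ x y : N → NNReal, x ≤ y → Φ x ≤ Φ y)
    (hhom : ∀ (a : NNReal) (x : N → NNReal), Φ (a • x) = a * Φ x) :
    (⨆ u ∈ K, (Φ u : ℝ≥0∞)) =
      ⨆ x : N → NNReal,
        (Φ x : ℝ≥0∞) /
          sInf {α : ℝ≥0∞ | ∃ a : NNReal, α = (a : ℝ≥0∞) ∧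
            x ∈ a • {y : N → NNReal | ∃ u ∈ K, y ≤ u}} :=
  le_antisymm
    (iSup₂_le fun u hu =>
      le_iSup_of_le u <| le_div_ennGauge_of_mem (D := {y | ∃ v ∈ K, y ≤ v}) ⟨u, hu, le_rfl⟩ _)
    (iSup_le <| div_ennGauge_lowerClosure_le_iSup (fun x y => hmono x y) hhom K)

/-- for a nonempty compact `K ⊆ (ℝ≥0)^N` with downward closure `K↓`,
and `Φ : (ℝ≥0)^N → ℝ≥0` monotone and positively homogeneous of degree 1,
`sup_{u ∈ K} Φ(u) = sup_x Φ(x) / γ_{K↓}(x)` where `γ_{K↓}` is the gauge of `K↓`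
(computed in `ℝ≥0∞`; the `ℝ≥0∞` conventions `0/0 = 0` and `a/∞ = 0` apply). -/
theorem gauge_variational {N : Type*} [Fintype N]
    (K : Set (N → NNReal)) (hne : K.Nonempty) (hcomp : IsCompact K)
    (Φ : (N → NNReal) → NNReal)
    (hmono : ∀ x y : N → NNReal, x ≤ y → Φ x ≤ Φ y)
    (hhom : ∀ (a : NNReal) (x : N → NNReal), Φ (a • x) = a * Φ x) :
    (⨆ u ∈ K, (Φ u : ℝ≥0∞)) =
      ⨆ x : N → NNReal,
        (Φ x : ℝ≥0∞) /
          sInf {α : ℝ≥0∞ | ∃ a : NNReal, α = (a : ℝ≥0∞) ∧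
            x ∈ a • {y : N → NNReal | ∃ u ∈ K, y ≤ u}} :=
  gauge_variational_general K Φ hmono hhom
end

section
/- Let K ⊆ (ℝ≥0)^d be nonempty, compact, convex, and coordinatewise downward closed (x ∈ K and 0 ≤ y ≤ x implies y ∈ K). Define the antiblocker abl(K) := { w ∈ (ℝ≥0)^d : ⟨q,w⟩ ≤ 1 for all q ∈ K }. Then for every q ∈ (ℝ≥0)^d, the gauge γ_K(q) := inf{α ≥ 0 : q ∈ α·K} satisfies γ_K(q) = sup_{w ∈ abl(K)} ⟨q,w⟩, where the right-hand side may be +∞. -/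
open scoped ENNReal Pointwise

/-!
The inequality `sup ≤ gauge` is immediate: if `q = a • z` with `z ∈ K`, then `⟨q, w⟩ ≤ a` for every
`w` in the antiblocker. Conversely, if `q ∉ β • K`, separate `β⁻¹ • q` from `K` by a functional
`⟨·, y⟩`. Since `K` is nonnegative and downward closed, the support function of `K` at `y` equals
that at the positive part `y⁺`, so after rescaling `y⁺` is a point of the antiblocker, and since
`q ≥ 0` it still separates, giving `⟨q, w⟩ > β`.
-/

open Matrix

variable {ι : Type*} {K : Set (ι → ℝ)}

theorem zero_mem_of_downward_closed (hK : ∀ x ∈ K, 0 ≤ x)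
    (hdown : ∀ x ∈ K, ∀ y, 0 ≤ y → y ≤ x → y ∈ K) (hne : K.Nonempty) : 0 ∈ K :=
  let ⟨x, hx⟩ := hne
  hdown x hx 0 le_rfl (hK x hx)

variable [Fintype ι]

def antiblocker (K : Set (ι → ℝ)) : Set (ι → ℝ) :=
  {w | 0 ≤ w ∧ ∀ z ∈ K, z ⬝ᵥ w ≤ 1}

theorem exists_mem_dotProduct_eq_dotProduct_posPart (hK : ∀ x ∈ K, 0 ≤ x)
    (hdown : ∀ x ∈ K, ∀ y, 0 ≤ y → y ≤ x → y ∈ K) {z : ι → ℝ} (hz : z ∈ K) (y : ι → ℝ) :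
    ∃ z' ∈ K, z' ⬝ᵥ y = z ⬝ᵥ y⁺ := by
  refine ⟨fun i => if 0 ≤ y i then z i else 0, hdown z hz _ (fun i => ?_) (fun i => ?_), ?_⟩
  · split_ifs
    exacts [hK z hz i, le_rfl]
  · split_ifs
    exacts [le_rfl, hK z hz i]
  · refine Finset.sum_congr rfl fun i _ => ?_
    by_cases hy : 0 ≤ y i
    · simp [hy]
    · simp [hy, posPart_eq_zero.2 (not_le.1 hy).le]

theorem dotProduct_le_of_mem_smul_antiblocker {a : ℝ} (ha : 0 ≤ a) {q w : ι → ℝ}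
    (hq : q ∈ a • K) (hw : w ∈ antiblocker K) : q ⬝ᵥ w ≤ a := by
  obtain ⟨z, hz, rfl⟩ := hq
  rw [smul_dotProduct, smul_eq_mul]
  simpa using mul_le_mul_of_nonneg_left (hw.2 z hz) ha

theorem exists_mem_antiblocker_one_lt_dotProduct (hK : ∀ x ∈ K, 0 ≤ x)
    (hdown : ∀ x ∈ K, ∀ y, 0 ≤ y → y ≤ x → y ∈ K) (h0 : 0 ∈ K) (hclosed : IsClosed K)
    (hconv : Convex ℝ K) {p : ι → ℝ} (hp : 0 ≤ p) (hpK : p ∉ K) :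
    ∃ w ∈ antiblocker K, 1 < p ⬝ᵥ w := by
  classical
  obtain ⟨f, u, hfK, hfp⟩ := geometric_hahn_banach_closed_point hconv hclosed hpK
  set y := (dotProductEquiv ℝ ι).symm f.toLinearMap
  have hf : ∀ x, f x = x ⬝ᵥ y := fun x => by
    rw [dotProduct_comm]
    exact (LinearMap.congr_fun ((dotProductEquiv ℝ ι).apply_symm_apply f.toLinearMap) x).symm
  have hu : 0 < u := by simpa using hfK 0 h0
  refine ⟨u⁻¹ • y⁺, ⟨smul_nonneg (inv_nonneg.2 hu.le) (posPart_nonneg y), fun z hz => ?_⟩, ?_⟩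
  · obtain ⟨z', hz', hzz'⟩ := exists_mem_dotProduct_eq_dotProduct_posPart hK hdown hz y
    rw [dotProduct_smul, smul_eq_mul, inv_mul_le_iff₀ hu, mul_one, ← hzz', ← hf]
    exact (hfK z' hz').le
  · rw [dotProduct_smul, smul_eq_mul, lt_inv_mul_iff₀ hu, mul_one]
    calc u < p ⬝ᵥ y := hf p ▸ hfp
      _ ≤ p ⬝ᵥ y⁺ := dotProduct_le_dotProduct_of_nonneg_left (le_posPart y) hp

/-- for a nonempty compact convex coordinatewise downward closed
`K ⊆ (ℝ≥0)^d`, the gauge of any nonnegative `q` equals the supremum of `⟨q,w⟩`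
over the antiblocker `abl(K) = { w ≥ 0 : ⟨q',w⟩ ≤ 1 ∀ q' ∈ K }` (possibly `+∞`,
computed in `ℝ≥0∞`). -/
theorem gauge_eq_antiblocker_sup {d : ℕ}
    (K : Set (Fin d → ℝ)) (hKnn : ∀ x ∈ K, ∀ i, 0 ≤ x i)
    (hne : K.Nonempty) (hcomp : IsCompact K) (hconv : Convex ℝ K)
    (hdown : ∀ x ∈ K, ∀ y : Fin d → ℝ, (∀ i, 0 ≤ y i) → y ≤ x → y ∈ K)
    (q : Fin d → ℝ) (hq : ∀ i, 0 ≤ q i) :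
    sInf {α : ℝ≥0∞ | ∃ a : NNReal, α = (a : ℝ≥0∞) ∧ q ∈ (a : ℝ) • K} =
      ⨆ w ∈ {w : Fin d → ℝ | (∀ i, 0 ≤ w i) ∧ ∀ z ∈ K, ∑ i, z i * w i ≤ 1},
        ENNReal.ofReal (∑ i, q i * w i) := by
  change _ = ⨆ w ∈ antiblocker K, ENNReal.ofReal (q ⬝ᵥ w)
  have h0 := zero_mem_of_downward_closed hKnn hdown hne
  refine le_antisymm (ENNReal.le_of_forall_nnreal_lt fun β hβ => ?_) (le_sInf ?_)
  · rcases eq_zero_or_pos β with rfl | hβ0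
    · simp
    have hqK : (β : ℝ)⁻¹ • q ∉ K := fun h => hβ.not_ge <| sInf_le
      ⟨β, rfl, (Set.mem_smul_set_iff_inv_smul_mem₀ (NNReal.coe_ne_zero.2 hβ0.ne') _ _).2 h⟩
    obtain ⟨w, hw, hqw⟩ := exists_mem_antiblocker_one_lt_dotProduct hKnn hdown h0
      hcomp.isClosed hconv (smul_nonneg (by positivity) hq) hqK
    rw [smul_dotProduct, smul_eq_mul, lt_inv_mul_iff₀ (by positivity), mul_one] at hqw
    calc (β : ℝ≥0∞) = ENNReal.ofReal β := ENNReal.ofReal_coe_nnreal.symm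
      _ ≤ ENNReal.ofReal (q ⬝ᵥ w) := ENNReal.ofReal_le_ofReal hqw.le
      _ ≤ ⨆ w ∈ antiblocker K, ENNReal.ofReal (q ⬝ᵥ w) :=
        le_iSup₂ (f := fun w _ => ENNReal.ofReal (q ⬝ᵥ w)) w hw
  · rintro _ ⟨a, rfl, hqa⟩
    exact iSup₂_le fun w hw => (ENNReal.ofReal_le_ofReal
      (dotProduct_le_of_mem_smul_antiblocker a.2 hqa hw)).trans_eq ENNReal.ofReal_coe_nnreal
end

section
/- Let G be a spanning subgraph of the r-dimensional hypercube Q_r (r ≥ 2) obtained by deleting fewer than 2^(r−2) edges. Then G has a connected component of size greater than 2^(r−1). -/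
/-!
Canonical paths give a weak edge-isoperimetric inequality for `Q_r`: for `u ∈ X`, `v ∉ X`, change
the coordinates of `u` into those of `v` one at a time, in increasing order; the path leaves `X`
along some boundary dart `(w, i)`. The pair `(u, v)` is recovered from `w` and the vertex agreeing
with `u` below `i` and with `v` from `i` on, whose `i`-th coordinate is fixed, so each dart is used
by at most `2^(r-1)` pairs and `|X| |Xᶜ| ≤ 2^(r-1) |∂X|`.

If every component had at most `2^(r-1)` vertices, some union `X` of components would satisfy
`2^(r-2) ≤ |X| ≤ 2^(r-1)`; then `|∂X| ≥ 2^(r-2)`, and every boundary edge of `X` was deleted.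
-/

/-- The `r`-dimensional hypercube graph on `{0,1}^r`: two vertices are adjacent
iff they differ in exactly one coordinate. -/
def cubeGraph (r : ℕ) : SimpleGraph (Fin r → Bool) :=
  SimpleGraph.fromRel fun x y => (Finset.univ.filter fun i => x i ≠ y i).card = 1

open Finset

lemma exists_mem_notMem_succ {α : Type*} {s : Set α} (p : ℕ → α) :
    ∀ {n : ℕ}, p 0 ∈ s → p n ∉ s → ∃ k < n, p k ∈ s ∧ p (k + 1) ∉ s
  | 0, h0, hn => absurd h0 hn
  | n + 1, h0, hn => by
    by_cases hpn : p n ∈ s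
    · exact ⟨n, n.lt_succ_self, hpn, hn⟩
    · obtain ⟨k, hk, hpk⟩ := exists_mem_notMem_succ p h0 hpn
      exact ⟨k, hk.trans n.lt_succ_self, hpk⟩

section ComponentUnion

variable {V : Type*}

def SimpleGraph.IsComponentUnion (G : SimpleGraph V) (X : Finset V) : Prop :=
  ∀ ⦃u v⦄, u ∈ X → G.Reachable u v → v ∈ X

lemma SimpleGraph.exists_isComponentUnion_le_card_le_two_mul [Fintype V] (G : SimpleGraph V)
    {a : ℕ} (hG : ∀ v, {u | G.Reachable v u}.ncard ≤ 2 * a) (ha : a ≤ Fintype.card V) :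
    ∃ X : Finset V, G.IsComponentUnion X ∧ a ≤ #X ∧ #X ≤ 2 * a := by
  classical
  obtain ⟨X, ⟨hX, haX⟩, hmin⟩ :=
    Set.exists_min_image {X : Finset V | G.IsComponentUnion X ∧ a ≤ #X} card
      (Set.toFinite _) ⟨univ, fun _ _ _ _ ↦ mem_univ _, by rwa [card_univ]⟩
  refine ⟨X, hX, haX, ?_⟩
  by_contra! hbig
  obtain ⟨v, hv⟩ : X.Nonempty := card_pos.mp (by omega)
  set C := {u | G.Reachable v u}.toFinset
  have hvC : v ∈ C := by simp [C]
  have hCX : C ⊆ X := fun u hu ↦ hX hv (by simpa [C] using hu)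
  have hC : G.IsComponentUnion C := fun u w hu huw ↦ by
    simp only [C, Set.mem_toFinset, Set.mem_ofPred_eq] at hu ⊢
    exact hu.trans huw
  have hXC : G.IsComponentUnion (X \ C) := fun u w hu huw ↦ by
    rw [mem_sdiff] at hu ⊢
    exact ⟨hX hu.1 huw, fun hw ↦ hu.2 (hC hw huw.symm)⟩
  have hCa : #C ≤ 2 * a := by rw [← Set.ncard_eq_toFinset_card']; exact hG v
  -- `C` and `X \ C` are unions of components strictly smaller than the minimal `X`
  have hC_lt : #C < a := by
    by_contra! h
    have := hmin C ⟨hC, h⟩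
    omega
  have hXC_lt : #(X \ C) < a := by
    by_contra! h
    have := hmin _ ⟨hXC, h⟩
    have := card_pos.mpr ⟨v, hvC⟩
    have := card_sdiff_of_subset hCX
    omega
  have := card_sdiff_of_subset hCX
  omega

end ComponentUnion

namespace Hypercube

variable {r : ℕ}

def flipAt (i : Fin r) (w : Fin r → Bool) : Fin r → Bool := Function.update w i (!w i)

lemma flipAt_apply_self (i : Fin r) (w : Fin r → Bool) : flipAt i w i = !w i := by
  simp [flipAt]

lemma flipAt_apply_of_ne {i j : Fin r} (w : Fin r → Bool) (h : j ≠ i) : flipAt i w j = w j := by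
  simp [flipAt, h]

lemma flipAt_left_injective (w : Fin r → Bool) : Function.Injective fun i ↦ flipAt i w := by
  intro i j hij
  by_contra hne
  have := congrFun hij i
  simp [flipAt_apply_self, flipAt_apply_of_ne w hne] at this

lemma cubeGraph_adj_flipAt (i : Fin r) (w : Fin r → Bool) : (cubeGraph r).Adj w (flipAt i w) := by
  have : (univ.filter fun j ↦ w j ≠ flipAt i w j) = {i} := by
    ext j
    by_cases h : j = i
    · simp [h, flipAt_apply_self]
    · simp [h, flipAt_apply_of_ne]
  rw [cubeGraph, SimpleGraph.fromRel_adj, this, card_singleton]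
  exact ⟨fun h ↦ by simpa [flipAt_apply_self] using congrFun h i, Or.inl rfl⟩

lemma card_filter_apply_eq (i : Fin r) (b : Bool) :
    #{z : Fin r → Bool | z i = b} = 2 ^ (r - 1) := by
  have := Fintype.card_filter_piFinset_const_eq_of_mem univ i (mem_univ b)
  rwa [Fintype.piFinset_univ, card_univ, Fintype.card_bool, Fintype.card_fin] at this

def splice (k : ℕ) (a b : Fin r → Bool) : Fin r → Bool := fun j ↦ if (j : ℕ) < k then a j else b j

lemma splice_zero (a b : Fin r → Bool) : splice 0 a b = b := by
  funext j
  simp [splice]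

lemma splice_of_le {k : ℕ} (hk : r ≤ k) (a b : Fin r → Bool) : splice k a b = a := by
  funext j
  simp [splice, j.isLt.trans_le hk]

lemma splice_apply_self (i : Fin r) (a b : Fin r → Bool) : splice i a b i = b i := by
  simp [splice]

lemma splice_splice_splice (k : ℕ) (a b : Fin r → Bool) :
    splice k (splice k a b) (splice k b a) = a := by
  funext j
  by_cases h : (j : ℕ) < k <;> simp [splice, h]

lemma splice_succ (i : Fin r) (a b : Fin r → Bool) :
    splice (i + 1) a b = Function.update (splice i a b) i (a i) := by
  funext j
  rcases lt_trichotomy (j : ℕ) i with h | h | h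
  · simp [splice, h, h.trans i.val.lt_succ_self, Fin.ne_of_lt h]
  · simp [splice, Fin.ext h]
  · simp [splice, h.not_gt, Nat.succ_le_of_lt h |>.not_gt, Fin.ne_of_gt h]

def edgeBoundary (X : Finset (Fin r → Bool)) : Finset ((Fin r → Bool) × Fin r) :=
  {p | p.1 ∈ X ∧ flipAt p.2 p.1 ∉ X}

lemma mem_edgeBoundary {X : Finset (Fin r → Bool)} {p : (Fin r → Bool) × Fin r} :
    p ∈ edgeBoundary X ↔ p.1 ∈ X ∧ flipAt p.2 p.1 ∉ X := by
  simp [edgeBoundary]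

lemma exists_splice_mem_edgeBoundary {X : Finset (Fin r → Bool)} {u v : Fin r → Bool}
    (hu : u ∈ X) (hv : v ∉ X) : ∃ i : Fin r, (splice i v u, i) ∈ edgeBoundary X ∧ v i = !u i := by
  obtain ⟨k, hk, hkX, hk1X⟩ := exists_mem_notMem_succ (s := (X : Set (Fin r → Bool)))
    (fun k ↦ splice k v u) (n := r) (by simpa [splice_zero]) (by simpa [splice_of_le le_rfl])
  let i : Fin r := ⟨k, hk⟩
  have hstep : splice (i + 1) v u = Function.update (splice i v u) i (v i) := splice_succ i v u
  by_cases h : v i = u i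
  · refine absurd ?_ hk1X
    change splice (i + 1) v u ∈ X
    rwa [hstep, h, ← splice_apply_self i v u, Function.update_eq_self]
  · have hvi : v i = !u i := by revert h; cases v i <;> cases u i <;> simp
    refine ⟨i, mem_edgeBoundary.2 ⟨hkX, ?_⟩, hvi⟩
    simpa [flipAt, splice_apply_self, ← hvi, ← hstep] using hk1X

lemma card_mul_card_compl_le (X : Finset (Fin r → Bool)) :
    #X * #Xᶜ ≤ #(edgeBoundary X) * 2 ^ (r - 1) := by
  let R (p : (Fin r → Bool) × (Fin r → Bool)) (d : (Fin r → Bool) × Fin r) : Prop :=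
    d.1 = splice d.2 p.2 p.1 ∧ p.2 d.2 = !p.1 d.2
  have := card_mul_le_card_mul R (s := X ×ˢ Xᶜ) (t := edgeBoundary X) (m := 1) (n := 2 ^ (r - 1))
    ?_ ?_
  · simpa [card_product] using this
  · rintro ⟨u, v⟩ huv
    rw [mem_product, mem_compl] at huv
    obtain ⟨i, hi, hvi⟩ := exists_splice_mem_edgeBoundary huv.1 huv.2
    exact card_pos.2 ⟨(splice i v u, i), (mem_bipartiteAbove R).2 ⟨hi, rfl, hvi⟩⟩
  · rintro ⟨w, i⟩ -
    -- a pair `(u, v)` over `(w, i)` is recovered from `w = splice i v u` and `splice i u v`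
    calc #((X ×ˢ Xᶜ).bipartiteBelow R (w, i)) ≤ #{z : Fin r → Bool | z i = !w i} := by
          refine card_le_card_of_injOn (fun p ↦ splice i p.1 p.2) ?_ ?_
          · rintro ⟨u, v⟩ huv
            simp only [coe_bipartiteBelow, Set.mem_ofPred_eq, R] at huv
            simp [splice_apply_self, huv.2.1, huv.2.2]
          · rintro ⟨u, v⟩ huv ⟨u', v'⟩ huv' h
            simp only [coe_bipartiteBelow, Set.mem_ofPred_eq, R] at huv huv' h
            have hw : splice i v u = splice i v' u' := huv.2.1.symm.trans huv'.2.1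
            rw [Prod.mk.injEq]
            constructor
            · rw [← splice_splice_splice i u v, ← splice_splice_splice i u' v', h, hw]
            · rw [← splice_splice_splice i v u, ← splice_splice_splice i v' u', h, hw]
      _ = 2 ^ (r - 1) := card_filter_apply_eq i _

lemma card_edgeBoundary_le_ncard_deleted {G : SimpleGraph (Fin r → Bool)}
    {X : Finset (Fin r → Bool)} (hX : G.IsComponentUnion X) :
    #(edgeBoundary X) ≤ ((cubeGraph r).edgeSet \ G.edgeSet).ncard := by
  rw [← Set.ncard_coe_finset]
  refine Set.ncard_le_ncard_of_injOn (fun p ↦ s(p.1, flipAt p.2 p.1)) ?_ ?_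
  · rintro ⟨w, i⟩ hwi
    rw [mem_coe, mem_edgeBoundary] at hwi
    exact ⟨cubeGraph_adj_flipAt i w, fun hG ↦ hwi.2 (hX hwi.1 hG.reachable)⟩
  · rintro ⟨w, i⟩ hwi ⟨w', i'⟩ hwi' h
    rw [mem_coe, mem_edgeBoundary] at hwi hwi'
    rcases Sym2.eq_iff.1 h with ⟨rfl, hflip⟩ | ⟨-, hw'⟩
    · exact Prod.ext rfl (flipAt_left_injective w hflip)
    · exact absurd (hw' ▸ hwi'.1) hwi.2

end Hypercube

theorem cube_deletion_large_component_general (r : ℕ) (hr : 2 ≤ r)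
    (G : SimpleGraph (Fin r → Bool))
    (hdel : ((cubeGraph r).edgeSet \ G.edgeSet).ncard < 2 ^ (r - 2)) :
    ∃ v, 2 ^ (r - 1) < ({u | G.Reachable v u} : Set (Fin r → Bool)).ncard := by
  by_contra! hsmall
  have hhalf : 2 ^ (r - 1) = 2 * 2 ^ (r - 2) := by rw [← pow_succ']; congr 1; omega
  have hcard : Fintype.card (Fin r → Bool) = 2 * 2 ^ (r - 1) := by
    rw [Fintype.card_fun, Fintype.card_bool, Fintype.card_fin, ← pow_succ']; congr 1; omega
  obtain ⟨X, hX, hX_lo, hX_hi⟩ :=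
    G.exists_isComponentUnion_le_card_le_two_mul (hhalf ▸ hsmall) (a := 2 ^ (r - 2)) (by omega)
  have hXc : 2 ^ (r - 1) ≤ #Xᶜ := by rw [card_compl]; omega
  have := calc
    2 ^ (r - 2) * 2 ^ (r - 1) ≤ #X * #Xᶜ := Nat.mul_le_mul hX_lo hXc
    _ ≤ #(Hypercube.edgeBoundary X) * 2 ^ (r - 1) := Hypercube.card_mul_card_compl_le X
    _ ≤ ((cubeGraph r).edgeSet \ G.edgeSet).ncard * 2 ^ (r - 1) :=
      Nat.mul_le_mul_right _ (Hypercube.card_edgeBoundary_le_ncard_deleted hX)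
    _ < 2 ^ (r - 2) * 2 ^ (r - 1) := Nat.mul_lt_mul_of_pos_right hdel (by positivity)
  exact lt_irrefl _ this

/-- a spanning subgraph `G` of `Q_r` (`r ≥ 2`) obtained by deleting
fewer than `2^(r−2)` edges has a connected component of size greater than
`2^(r−1)`. -/
theorem cube_deletion_large_component (r : ℕ) (hr : 2 ≤ r)
    (G : SimpleGraph (Fin r → Bool)) (hsub : G ≤ cubeGraph r)
    (hdel : ((cubeGraph r).edgeSet \ G.edgeSet).ncard < 2 ^ (r - 2)) :
    ∃ v, 2 ^ (r - 1) < ({u | G.Reachable v u} : Set (Fin r → Bool)).ncard :=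
  cube_deletion_large_component_general r hr G hdel
end
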